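/- arXiv:1710.06308 — 10 statements merged into one kernel-verified Lean document; each statement's English description precedes it below -/
import Mathlib

section
/- If D > b/2 (with 1 ≤ D ≤ b-1), then applying the Kaprekar digit-difference map to the triple of digits (D-1, b-1, b-D) yields a new digit difference D_new = D - 1; in particular the number (D-1)·b² + (b-1)·b + (b-D) is not a fixed point of the Kaprekar transform. -/
/-- If 2D > b (with 1 ≤ D ≤ b-1), the Kaprekar transform applied
to the number with digits (D-1, b-1, b-D) — whose sorted digits give
descending arrangement (b-1, D-1, b-D) and ascending (b-D, D-1, b-1) —
yields the number with digits (D-2, b-1, b-D+1), with new digit difference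
D_new = D - 1; in particular the input is not a fixed point. -/
theorem kaprekar_not_fixed_of_large_D (b D : ℕ) (hb : 2 ≤ b)
    (hD1 : 1 ≤ D) (hDb : D ≤ b - 1) (hbig : b < 2 * D) :
    ((b - 1) * b ^ 2 + (D - 1) * b + (b - D)) -
        ((b - D) * b ^ 2 + (D - 1) * b + (b - 1)) =
      (D - 2) * b ^ 2 + (b - 1) * b + (b - D + 1) ∧
    (D - 2) * b ^ 2 + (b - 1) * b + (b - D + 1) ≠
      (D - 1) * b ^ 2 + (b - 1) * b + (b - D) := by
  have h2 : 2 ≤ D := by omega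
  have hDb' : D + 1 ≤ b := by omega
  have hsub : (b - D) * b ^ 2 + (D - 1) * b + (b - 1) ≤
      (b - 1) * b ^ 2 + (D - 1) * b + (b - D) := by
    have : (b - D) * b ^ 2 + (b - 1) ≤ (b - 1) * b ^ 2 + (b - D) := by
      have h1 : (b - D) * b ^ 2 + (D - 1) * b ^ 2 = (b - 1) * b ^ 2 := by
        rw [← Nat.add_mul]; congr 1; omega
      have h2b : b ≤ (D - 1) * b ^ 2 := by
        calc b ≤ 1 * b ^ 2 := by nlinarith
        _ ≤ (D - 1) * b ^ 2 := Nat.mul_le_mul_right _ (by omega)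
      omega
    omega
  constructor
  · zify [hsub, show 1 ≤ b by omega, show D ≤ b by omega, show 2 ≤ D from h2]
    ring
  · intro h
    zify [show 1 ≤ b by omega, show D ≤ b by omega, show 2 ≤ D from h2, hD1] at h
    have hb2 : (1 : ℤ) < (b : ℤ) ^ 2 := by
      have : (2 : ℤ) ≤ (b : ℤ) := by exact_mod_cast hb
      nlinarith
    nlinarith
end

section
/- If 1 ≤ D ≤ b/2, the Kaprekar transform applied to the number with digits (D-1, b-1, b-D) yields the number with digits (b-D-1, b-1, D); this is a fixed point if and only if 2D = b. -/
/-- If 1 ≤ D and 2D ≤ b, the Kaprekar transform applied to the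
number with digits (D-1, b-1, b-D) — sorted descending (b-1, b-D, D-1) and
ascending (D-1, b-D, b-1) — yields the number with digits (b-D-1, b-1, D),
and this equals the original number iff 2D = b. -/
theorem kaprekar_fixed_iff_half (b D : ℕ) (hb : 2 ≤ b)
    (hD1 : 1 ≤ D) (hsmall : 2 * D ≤ b) :
    ((b - 1) * b ^ 2 + (b - D) * b + (D - 1)) -
        ((D - 1) * b ^ 2 + (b - D) * b + (b - 1)) =
      (b - D - 1) * b ^ 2 + (b - 1) * b + D ∧
    ((b - D - 1) * b ^ 2 + (b - 1) * b + D =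
        (D - 1) * b ^ 2 + (b - 1) * b + (b - D) ↔ 2 * D = b) := by
  have hDb : D ≤ b := by omega
  have hb1 : 1 ≤ b := by omega
  have hbd1 : 1 ≤ b - D := by omega
  have key : (b - 1) * b ^ 2 + (b - D) * b + (D - 1) =
      ((D - 1) * b ^ 2 + (b - D) * b + (b - 1)) +
        ((b - D - 1) * b ^ 2 + (b - 1) * b + D) := by
    zify [hD1, hDb, hb1, hbd1]
    ring
  refine ⟨by omega, ?_, ?_⟩
  · intro h
    zify [hD1, hDb, hb1, hbd1] at h ⊢
    have hf : ((b : ℤ) - 2 * D) * (b ^ 2 - 1) = 0 := by linear_combination h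
    rcases mul_eq_zero.1 hf with h1 | h2
    · linarith
    · nlinarith [show (2:ℤ) ≤ b by exact_mod_cast hb]
  · intro h
    zify [hD1, hDb, hb1, hbd1]
    have : (b : ℤ) = 2 * D := by exact_mod_cast h.symm
    rw [this]; ring
end

section
/- For an even base b ≥ 2, the number n = (b/2 - 1)·b² + (b-1)·b + b/2 is a fixed point of the 3-digit Kaprekar transform: the difference between its maximum and minimum digits is b/2, and (b² - 1)·(b/2) = n. -/
/-- For even base b = 2m ≥ 2, the number
n = (m-1)·b² + (b-1)·b + m is a fixed point of the 3-digit Kaprekar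
transform: its max digit is b-1, min digit is m-1, the digit difference is
b - 1 - (m - 1) = m, and (b² - 1)·m = n. -/
theorem kaprekar_constant_even_base (b m : ℕ) (hb : 2 ≤ b) (hbm : b = 2 * m) :
    max (m - 1) (max (b - 1) m) - min (m - 1) (min (b - 1) m) = m ∧
      (b ^ 2 - 1) * m = (m - 1) * b ^ 2 + (b - 1) * b + m := by
  subst hbm
  have hm : 1 ≤ m := by omega
  constructor
  · omega
  · have h1 : 1 ≤ (2*m)^2 := by nlinarith
    have h2 : 1 ≤ 2 * m := by omega
    have h3 : 1 ≤ m * 2 := by omega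
    zify [hm, h1, h2, h3]
    ring
end

section
/- Under the 3-digit Kaprekar transform, the absolute difference between the two outer digits decreases by exactly 2 with each application, provided the input is itself the output of a prior Kaprekar transform and the outer digit difference is at least 2; formally, if a number has digits (D-1, b-1, b-D) with outer digit difference |（D-1) - (b-D)| = e ≥ 2, then its Kaprekar image has digits whose outer difference is e - 2. -/
/-- For a number in the image of the 3-digit Kaprekar transform,
with digits (D-1, b-1, b-D), 1 ≤ D ≤ b-1, the Kaprekar transform sends it to
the number with digits (D'-1, b-1, b-D') where D' = (b-1) - min (D-1) (b-D);
if the outer digit difference e = |(D-1) - (b-D)| is at least 2, then the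
image's outer digit difference |(D'-1) - (b-D')| equals e - 2. -/
theorem kaprekar_outer_diff_decreases_by_two (b D : ℕ) (hb : 2 ≤ b)
    (hD1 : 1 ≤ D) (hDb : D ≤ b - 1)
    (he : 2 ≤ (((D : ℤ) - 1) - ((b : ℤ) - D)).natAbs) :
    (((((b - 1) - min (D - 1) (b - D) : ℕ) : ℤ) - 1) -
        ((b : ℤ) - (((b - 1) - min (D - 1) (b - D) : ℕ) : ℤ))).natAbs =
      (((D : ℤ) - 1) - ((b : ℤ) - D)).natAbs - 2 := by
  rcases le_total (D - 1) (b - D) with h | h <;>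
    simp only [min_eq_left h, min_eq_right h] <;>
    push_cast [Nat.sub_sub] <;> omega
end

section
/- For even base b, every 3-digit base-b number in the image of the Kaprekar transform reaches the fixed point (b/2-1)·b² + (b-1)·b + b/2 after finitely many further applications of the Kaprekar transform. -/
/-- The list of the `k` base-`b` digits of `n` (least significant first). -/
def kapDigits (b k n : ℕ) : List ℕ := (List.range k).map (fun i => n / b ^ i % b)

/-- The value of a digit list (most significant first) in base `b`. -/
def kapVal (b : ℕ) (l : List ℕ) : ℕ := l.foldl (fun acc d => acc * b + d) 0

/-- The `k`-digit Kaprekar transform in base `b`: sort the digits and subtract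
the ascending arrangement from the descending arrangement. -/
def kap (b k n : ℕ) : ℕ :=
  let s := (kapDigits b k n).insertionSort (· ≤ ·)
  kapVal b s.reverse - kapVal b s

lemma kapDigits3 (b x y z : ℕ) (hb : 0 < b) (hx : x < b) (hy : y < b) (hz : z < b) :
    kapDigits b 3 (x * b ^ 2 + y * b + z) = [z, y, x] := by
  have hn : x * b ^ 2 + y * b + z = z + (y + x * b) * b := by ring
  have hdiv : (x * b ^ 2 + y * b + z) / b = y + x * b := by
    rw [hn, Nat.add_mul_div_right _ _ hb, Nat.div_eq_of_lt hz, Nat.zero_add]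
  have hdiv2 : (x * b ^ 2 + y * b + z) / b ^ 2 = x := by
    rw [pow_two, ← Nat.div_div_eq_div_mul]
    rw [show x * (b*b) + y*b + z = x * b^2 + y*b + z by ring, hdiv,
      Nat.add_mul_div_right _ _ hb, Nat.div_eq_of_lt hy, Nat.zero_add]
  simp [kapDigits, List.range_succ]
  refine ⟨?_, ?_, ?_⟩
  · rw [hn, Nat.add_mul_mod_self_right, Nat.mod_eq_of_lt hz]
  · rw [hdiv, Nat.add_mul_mod_self_right, Nat.mod_eq_of_lt hy]
  · rw [hdiv2, Nat.mod_eq_of_lt hx]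

lemma kapVal3 (b x y z : ℕ) : kapVal b [x, y, z] = x * b ^ 2 + y * b + z := by
  simp [kapVal]; ring

/-- One Kaprekar step on `(b²-1)·D`. -/
lemma kap_step (b : ℕ) (hb : 4 ≤ b) (D : ℕ) (hD1 : 1 ≤ D) (hDb : D ≤ b - 1) :
    kap b 3 ((b ^ 2 - 1) * D) = (b ^ 2 - 1) * (if 2 * D ≤ b then b - D else D - 1) := by
  have hb0 : 0 < b := by omega
  have hb2 : 1 ≤ b ^ 2 := Nat.one_le_pow _ _ hb0
  have hDb' : D ≤ b := by omega
  have hN : (b ^ 2 - 1) * D = (D - 1) * b ^ 2 + (b - 1) * b + (b - D) := by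
    zify [hb2, hD1, hDb', hb0.le, show 1 ≤ b by omega]
    ring
  have hx : D - 1 < b := by omega
  have hy : b - 1 < b := by omega
  have hz : b - D < b := by omega
  rw [hN, kap]
  rw [kapDigits3 b _ _ _ hb0 hx hy hz]
  have hne : ¬ (b - 1 ≤ D - 1) := by omega
  by_cases hcase : 2 * D ≤ b
  · have h1 : ¬ (b - D ≤ D - 1) := by omega
    have h2 : b - D ≤ b - 1 := by omega
    have hsort : ([b - D, b - 1, D - 1] : List ℕ).insertionSort (· ≤ ·)
        = [D - 1, b - D, b - 1] := by
      simp [List.insertionSort, List.orderedInsert, hne, h1, h2]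
    rw [hsort, if_pos hcase]
    simp only [List.reverse_cons, List.reverse_nil, List.nil_append, List.cons_append]
    rw [kapVal3, kapVal3]
    zify [hD1, hDb', show 1 ≤ b by omega, hb2,
      show (D-1)*b^2 + (b-D)*b + (b-1) ≤ (b-1)*b^2 + (b-D)*b + (D-1) by
        nlinarith [Nat.sub_le b D, Nat.sub_le_sub_right hDb 1]]
    ring
  · have h1 : b - D ≤ D - 1 := by omega
    have hsort : ([b - D, b - 1, D - 1] : List ℕ).insertionSort (· ≤ ·)
        = [b - D, D - 1, b - 1] := by
      simp [List.insertionSort, List.orderedInsert, hne, h1]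
    rw [hsort, if_neg hcase]
    simp only [List.reverse_cons, List.reverse_nil, List.nil_append, List.cons_append]
    rw [kapVal3, kapVal3]
    zify [hD1, hDb', show 1 ≤ b by omega, hb2,
      show (b-D)*b^2 + (D-1)*b + (b-1) ≤ (b-1)*b^2 + (D-1)*b + (b-D) by
        nlinarith [Nat.sub_le b D, Nat.sub_le_sub_right hDb 1]]
    ring

/-- From any `D` with `b/2 ≤ D ≤ b-1`, iterating `kap` reaches `(b²-1)·(b/2)`. -/
lemma kap_reach (b : ℕ) (hb : 4 ≤ b) (heven : Even b) :
    ∀ n D : ℕ, b / 2 ≤ D → D ≤ b - 1 → D - b / 2 ≤ n →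
    ∃ k : ℕ, (kap b 3)^[k] ((b ^ 2 - 1) * D) = (b ^ 2 - 1) * (b / 2) := by
  obtain ⟨c, rfl⟩ := heven
  have hc2 : (c + c) / 2 = c := by omega
  intro n
  induction n with
  | zero =>
    intro D h1 h2 h3
    exact ⟨0, by rw [Function.iterate_zero_apply]; congr 1; omega⟩
  | succ n ih =>
    intro D h1 h2 h3
    by_cases hD : D = (c + c) / 2
    · exact ⟨0, by rw [Function.iterate_zero_apply, hD]⟩
    · have hgt : ¬ (2 * D ≤ c + c) := by omega
      have hstep := kap_step (c + c) hb D (by omega) h2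
      rw [if_neg hgt] at hstep
      obtain ⟨k, hk⟩ := ih (D - 1) (by omega) (by omega) (by omega)
      exact ⟨k + 1, by rw [Function.iterate_succ_apply, hstep, hk]⟩

/-- For even base b ≥ 4, every 3-digit base-b number in the image
of the Kaprekar transform, i.e. every (b²-1)·D with 1 ≤ D ≤ b-1, reaches the
fixed point (b/2-1)·b² + (b-1)·b + b/2 after finitely many applications. -/
theorem kaprekar_reaches_constant_even_base (b : ℕ) (hb : 4 ≤ b) (heven : Even b)
    (D : ℕ) (hD1 : 1 ≤ D) (hDb : D ≤ b - 1) :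
    ∃ k : ℕ, (kap b 3)^[k] ((b ^ 2 - 1) * D) =
      (b / 2 - 1) * b ^ 2 + (b - 1) * b + b / 2 := by
  have htarget : (b ^ 2 - 1) * (b / 2) = (b / 2 - 1) * b ^ 2 + (b - 1) * b + b / 2 := by
    obtain ⟨c, rfl⟩ := heven
    have hc2 : (c + c) / 2 = c := by omega
    rw [hc2]
    zify [Nat.one_le_pow 2 (c+c) (by omega), show 1 ≤ c by omega, show 1 ≤ c + c by omega]
    ring
  rw [← htarget]
  by_cases hcase : b / 2 ≤ D
  · exact kap_reach b hb heven (D - b / 2) D hcase hDb le_rfl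
  · have hle : 2 * D ≤ b := by omega
    have hstep := kap_step b hb D hD1 hDb
    rw [if_pos hle] at hstep
    obtain ⟨k, hk⟩ := kap_reach b hb heven ((b - D) - b / 2) (b - D)
      (by omega) (by omega) le_rfl
    exact ⟨k + 1, by rw [Function.iterate_succ_apply, hstep, hk]⟩
end

section
/- For odd base b, the 3-digit Kaprekar transform has no nonzero fixed point: there is no D with 1 ≤ D ≤ b-1 such that (b²-1)·D has max-min digit difference D. -/
/-- For odd base b ≥ 3, there is no D with 1 ≤ D ≤ b-1 such that
the 3-digit number (b²-1)·D has max-min digit difference D; hence the 3-digit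
Kaprekar transform has no nonzero fixed point. -/
theorem kaprekar_no_fixed_point_odd_base (b : ℕ) (hb : 3 ≤ b) (hodd : Odd b) :
    ¬ ∃ D : ℕ, 1 ≤ D ∧ D ≤ b - 1 ∧
      (max ((b ^ 2 - 1) * D % b) (max ((b ^ 2 - 1) * D / b % b) ((b ^ 2 - 1) * D / b ^ 2 % b)) -
        min ((b ^ 2 - 1) * D % b) (min ((b ^ 2 - 1) * D / b % b) ((b ^ 2 - 1) * D / b ^ 2 % b)))
        = D := by
  rintro ⟨D, hD1, hD2, heq⟩
  obtain ⟨k, hk⟩ := hodd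
  set d := D - 1 with hd
  set e := b - D with he
  have hbde : b = d + e + 1 := by omega
  have hDd : D = d + 1 := by omega
  have he1 : 1 ≤ e := by omega
  have hbpos : 0 < b := by omega
  have hsq : (b ^ 2 - 1) = (d + e) * (d + e + 2) := by
    refine Nat.sub_eq_of_eq_add ?_
    rw [hbde]; ring
  have key : (b ^ 2 - 1) * D = (d * b + (b - 1)) * b + e := by
    rw [hsq, hDd, hbde]
    have hb1 : d + e + 1 - 1 = d + e := by omega
    rw [hb1]; ring
  have hmod : (b ^ 2 - 1) * D % b = e := by
    rw [key, Nat.add_comm, Nat.add_mul_mod_self_right, Nat.mod_eq_of_lt (by omega)]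
  have hdiv : (b ^ 2 - 1) * D / b = d * b + (b - 1) := by
    rw [key, Nat.add_comm, Nat.add_mul_div_right _ _ hbpos,
      Nat.div_eq_of_lt (by omega), Nat.zero_add]
  have hmod2 : (b ^ 2 - 1) * D / b % b = b - 1 := by
    rw [hdiv, Nat.add_comm, Nat.add_mul_mod_self_right, Nat.mod_eq_of_lt (by omega)]
  have hdiv2 : (b ^ 2 - 1) * D / b ^ 2 % b = d := by
    have hstep : (b ^ 2 - 1) * D / b ^ 2 = (b ^ 2 - 1) * D / b / b := by
      rw [Nat.div_div_eq_div_mul, ← sq]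
    rw [hstep, hdiv, Nat.add_comm, Nat.add_mul_div_right _ _ hbpos,
      Nat.div_eq_of_lt (by omega), Nat.zero_add, Nat.mod_eq_of_lt (by omega)]
  rw [hmod, hmod2, hdiv2] at heq
  rcases le_total e d with h | h <;>
    simp only [max_def, min_def] at heq <;>
    split_ifs at heq <;> omega
end

section
/- Every 4-digit base-10 number with at least two distinct digits reaches 6174 after at most 7 applications of the Kaprekar transform. -/
/-- All possible values of one Kaprekar step on a 4-digit number whose digits
are not all equal. -/
def kapSet : List ℕ := [9801, 9711, 8712, 9621, 8622, 7623, 9531, 8532, 7533, 6534,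
  9441, 8442, 7443, 6444, 5445, 9351, 8352, 7353, 6354, 5355, 4356, 9261, 8262, 7263,
  6264, 5265, 4266, 3267, 9171, 8172, 7173, 6174, 5175, 4176, 3177, 2178, 9081, 8082,
  7083, 6084, 5085, 4086, 3087, 2088, 1089, 8991, 7992, 6993, 5994, 4995, 3996, 2997,
  1998, 999]

/-- Either one Kaprekar step of `n` lands in `kapSet`, or all digits of `n` are equal. -/
def kapP (n : ℕ) : Prop := kapSet.contains (kap 10 4 n) = true ∨
  (n % 10 = n / 10 % 10 ∧ n % 10 = n / 100 % 10 ∧ n % 10 = n / 1000 % 10)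

instance : DecidablePred kapP := fun _ => inferInstanceAs (Decidable (_ ∨ _))

set_option maxHeartbeats 4000000 in
set_option maxRecDepth 10000 in
theorem kapChunk0 : ∀ m < 1000, kapP (0 + m) := by decide

set_option maxHeartbeats 4000000 in
set_option maxRecDepth 10000 in
theorem kapChunk1 : ∀ m < 1000, kapP (1000 + m) := by decide

set_option maxHeartbeats 4000000 in
set_option maxRecDepth 10000 in
theorem kapChunk2 : ∀ m < 1000, kapP (2000 + m) := by decide

set_option maxHeartbeats 4000000 in
set_option maxRecDepth 10000 in
theorem kapChunk3 : ∀ m < 1000, kapP (3000 + m) := by decide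

set_option maxHeartbeats 4000000 in
set_option maxRecDepth 10000 in
theorem kapChunk4 : ∀ m < 1000, kapP (4000 + m) := by decide

set_option maxHeartbeats 4000000 in
set_option maxRecDepth 10000 in
theorem kapChunk5 : ∀ m < 1000, kapP (5000 + m) := by decide

set_option maxHeartbeats 4000000 in
set_option maxRecDepth 10000 in
theorem kapChunk6 : ∀ m < 1000, kapP (6000 + m) := by decide

set_option maxHeartbeats 4000000 in
set_option maxRecDepth 10000 in
theorem kapChunk7 : ∀ m < 1000, kapP (7000 + m) := by decide

set_option maxHeartbeats 4000000 in
set_option maxRecDepth 10000 in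
theorem kapChunk8 : ∀ m < 1000, kapP (8000 + m) := by decide

set_option maxHeartbeats 4000000 in
set_option maxRecDepth 10000 in
theorem kapChunk9 : ∀ m < 1000, kapP (9000 + m) := by decide

set_option maxHeartbeats 4000000 in
set_option maxRecDepth 10000 in
theorem kap_stage2 : ∀ m ∈ kapSet, (kap 10 4)^[6] m = 6174 := by decide

theorem kap_stage1 (n : ℕ) (hn : n < 10000) : kapP n := by
  have key : ∀ m < 1000, kapP (1000 * (n / 1000) + m) := by
    have ha : n / 1000 < 10 := by omega
    interval_cases h : n / 1000
    · exact kapChunk0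
    · exact kapChunk1
    · exact kapChunk2
    · exact kapChunk3
    · exact kapChunk4
    · exact kapChunk5
    · exact kapChunk6
    · exact kapChunk7
    · exact kapChunk8
    · exact kapChunk9
  have := key (n % 1000) (Nat.mod_lt _ (by norm_num))
  rwa [Nat.div_add_mod] at this

/-- Every 4-digit base-10 string (0 ≤ n ≤ 9999, leading zeros
allowed) whose four digits are not all equal reaches 6174 after at most 7
applications of the Kaprekar transform. -/
theorem kaprekar_four_digit_base_ten (n : ℕ) (hn : n < 10000)
    (hdistinct : ¬ (n % 10 = n / 10 % 10 ∧ n % 10 = n / 100 % 10 ∧ n % 10 = n / 1000 % 10)) :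
    (kap 10 4)^[7] n = 6174 := by
  have h1 := (kap_stage1 n hn).resolve_right hdistinct
  have hmem : kap 10 4 n ∈ kapSet := List.elem_iff.mp h1
  have h2 := kap_stage2 _ hmem
  rw [show (7 : ℕ) = 6 + 1 from rfl, Function.iterate_add_apply, Function.iterate_one]
  exact h2
end

section
/- For every n ≥ 0, the four values 6·4ⁿ, 2·4ⁿ - 1, 8·4ⁿ - 1, 4·4ⁿ are valid digits in base b = 10·4ⁿ (i.e., each lies in [0, b-1]), and the number with these digits in base b is a fixed point of the 4-digit Kaprekar transform in base b. -/
lemma kapDigits_four {b d0 d1 d2 d3 : ℕ} (hb : 0 < b) (h0 : d0 < b) (h1 : d1 < b)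
    (h2 : d2 < b) (h3 : d3 < b) :
    kapDigits b 4 (d0 + b * (d1 + b * (d2 + b * d3))) = [d0, d1, d2, d3] := by
  have e1 : (d0 + b * (d1 + b * (d2 + b * d3))) / b = d1 + b * (d2 + b * d3) := by
    rw [Nat.add_mul_div_left _ _ hb, Nat.div_eq_of_lt h0, zero_add]
  have e2 : (d1 + b * (d2 + b * d3)) / b = d2 + b * d3 := by
    rw [Nat.add_mul_div_left _ _ hb, Nat.div_eq_of_lt h1, zero_add]
  have e3 : (d2 + b * d3) / b = d3 := by
    rw [Nat.add_mul_div_left _ _ hb, Nat.div_eq_of_lt h2, zero_add]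
  simp [kapDigits, List.range_succ, pow_succ, ← Nat.div_div_eq_div_mul, e1, e2, e3,
    Nat.add_mul_mod_self_left, Nat.mod_eq_of_lt, h0, h1, h2, h3]

lemma kapSort_four (r : ℕ) :
    List.insertionSort (· ≤ ·) [4*r+4, 8*r+7, 2*r+1, 6*r+6] = [2*r+1, 4*r+4, 6*r+6, 8*r+7] := by
  have hA : 2*r+1 ≤ 6*r+6 := by omega
  have hB : ¬ (8*r+7 ≤ 2*r+1) := by omega
  have hC : ¬ (8*r+7 ≤ 6*r+6) := by omega
  have hD : ¬ (4*r+4 ≤ 2*r+1) := by omega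
  have hE : 4*r+4 ≤ 6*r+6 := by omega
  simp [List.insertionSort, List.orderedInsert, hA, hB, hC, hD, hE]

/-- For every n ≥ 0, setting b = 10·4ⁿ, the four values
6·4ⁿ, 2·4ⁿ-1, 8·4ⁿ-1, 4·4ⁿ are valid base-b digits (each < b), and the
4-digit base-b number with these digits is a fixed point of the 4-digit
Kaprekar transform in base b. -/
theorem kaprekar_four_digit_constant_family (n : ℕ) :
    (6 * 4 ^ n < 10 * 4 ^ n ∧ 2 * 4 ^ n - 1 < 10 * 4 ^ n ∧
      8 * 4 ^ n - 1 < 10 * 4 ^ n ∧ 4 * 4 ^ n < 10 * 4 ^ n) ∧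
    kap (10 * 4 ^ n) 4
        ((6 * 4 ^ n) * (10 * 4 ^ n) ^ 3 + (2 * 4 ^ n - 1) * (10 * 4 ^ n) ^ 2 +
          (8 * 4 ^ n - 1) * (10 * 4 ^ n) + 4 * 4 ^ n) =
      (6 * 4 ^ n) * (10 * 4 ^ n) ^ 3 + (2 * 4 ^ n - 1) * (10 * 4 ^ n) ^ 2 +
        (8 * 4 ^ n - 1) * (10 * 4 ^ n) + 4 * 4 ^ n := by
  obtain ⟨r, hr⟩ : ∃ r, 4 ^ n = r + 1 :=
    ⟨4 ^ n - 1, by have : 0 < 4 ^ n := pow_pos (by norm_num) n; omega⟩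
  rw [hr, show 2 * (r+1) - 1 = 2*r+1 from by omega, show 8 * (r+1) - 1 = 8*r+7 from by omega,
    show 6 * (r+1) = 6*r+6 from by omega, show 4 * (r+1) = 4*r+4 from by omega]
  set b : ℕ := 10 * (r + 1) with hb
  have hbpos : 0 < b := by omega
  have hN : (6*r+6) * b ^ 3 + (2*r+1) * b ^ 2 + (8*r+7) * b + (4*r+4)
      = (4*r+4) + b * ((8*r+7) + b * ((2*r+1) + b * (6*r+6))) := by ring
  refine ⟨by omega, ?_⟩
  rw [kap, hN, kapDigits_four hbpos (by omega) (by omega) (by omega) (by omega), kapSort_four]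
  simp only [List.reverse_cons, List.reverse_nil, List.nil_append, List.cons_append, kapVal,
    List.foldl, zero_mul, zero_add]
  rw [show ((((8*r+7) * b + (6*r+6)) * b + (4*r+4)) * b + (2*r+1))
      = ((4*r+4) + b * ((8*r+7) + b * ((2*r+1) + b * (6*r+6))))
        + ((((2*r+1) * b + (4*r+4)) * b + (6*r+6)) * b + (8*r+7)) from by rw [hb]; ring,
    Nat.add_sub_cancel]
end

section
/- For base 10 and 3-digit numbers: among the 990 three-digit strings 000–999 with at least two distinct digits, the most common number of Kaprekar iterations needed to reach 495 is 3, with exactly 270 such numbers requiring exactly 3 iterations. -/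
/-- `kapIter b k target n j` means `j` is the least number of iterations of the
`k`-digit base-`b` Kaprekar transform sending `n` to `target`. -/
def kapIter (b k target n j : ℕ) : Prop :=
  (kap b k)^[j] n = target ∧ ∀ m < j, (kap b k)^[m] n ≠ target

open Classical

set_option maxRecDepth 40000

/-- Boolean version of the filtering predicate. -/
def kapGood (j n : ℕ) : Bool :=
  decide (kap 10 3 n ≠ 0) && decide ((kap 10 3)^[j] n = 495) &&
    (List.range j).all (fun m => decide ((kap 10 3)^[m] n ≠ 495))

lemma kapGood_iff (j n : ℕ) :
    (kap 10 3 n ≠ 0 ∧ kapIter 10 3 495 n j) ↔ kapGood j n = true := by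
  simp [kapGood, kapIter, List.all_eq_true, and_assoc]

lemma kapCard_eq (j : ℕ) :
    ((Finset.range 1000).filter
        (fun n => kap 10 3 n ≠ 0 ∧ kapIter 10 3 495 n j)).card =
    ((Finset.range 1000).filter (fun n => kapGood j n = true)).card := by
  congr 1
  exact Finset.filter_congr (fun n _ => kapGood_iff j n)

lemma kapSixBool :
    (List.range 1000).all
      (fun n => !(decide (kap 10 3 n ≠ 0)) || decide ((kap 10 3)^[6] n = 495)) = true := by
  decide

lemma kapSix : ∀ n < 1000, kap 10 3 n ≠ 0 → (kap 10 3)^[6] n = 495 := by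
  intro n hn h
  have := List.all_eq_true.1 kapSixBool n (List.mem_range.2 hn)
  simpa [h] using this

set_option maxHeartbeats 2000000 in
/-- Among the 990 three-digit base-10 strings 000–999 with at
least two distinct digits, exactly 270 require exactly 3 Kaprekar iterations
to reach 495, and this count strictly exceeds the count for every other
iteration number j ≠ 3. -/
theorem kaprekar_iteration_mode_base_ten :
    ((Finset.range 1000).filter
        (fun n => kap 10 3 n ≠ 0 ∧ kapIter 10 3 495 n 3)).card = 270 ∧
    ∀ j : ℕ, j ≠ 3 →
      ((Finset.range 1000).filter
          (fun n => kap 10 3 n ≠ 0 ∧ kapIter 10 3 495 n j)).card < 270 := by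
  constructor
  · rw [kapCard_eq]; decide
  · intro j hj
    rw [kapCard_eq]
    by_cases h7 : j ≤ 6
    · interval_cases j
      · decide
      · decide
      · decide
      · exact absurd rfl hj
      · decide
      · decide
      · decide
    · have hempty : ((Finset.range 1000).filter (fun n => kapGood j n = true)) = ∅ := by
        rw [Finset.filter_eq_empty_iff]
        intro n hn hg
        have h := (kapGood_iff j n).2 hg
        exact h.2.2 6 (by omega) (kapSix n (Finset.mem_range.1 hn) h.1)
      rw [hempty]
      simp
end

section
/- A 3-digit number in base b is a fixed point of the Kaprekar transform if and only if b is even and the number equals (b/2-1)·b² + (b-1)·b + b/2; hence odd bases admit no 3-digit Kaprekar fixed point other than 0. -/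
lemma kap_sorted (b n x y z : ℕ) (hb : 2 ≤ b)
    (h : (kapDigits b 3 n).insertionSort (· ≤ ·) = [x, y, z]) (hxz : x ≤ z) :
    kap b 3 n = (z - x) * (b ^ 2 - 1) := by
  obtain ⟨E, rfl⟩ : ∃ E, z = x + E := ⟨z - x, by omega⟩
  have h2 : 1 ≤ b ^ 2 := Nat.one_le_pow _ _ (by omega)
  simp only [kap, h]
  simp only [kapVal, List.reverse_cons, List.reverse_nil, List.nil_append,
    List.cons_append, List.foldl_cons, List.foldl_nil]
  have hE : E ≤ E * b ^ 2 := Nat.le_mul_of_pos_right E (by omega)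
  have g1 : ((0*b+(x+E))*b+y)*b+x + E = (((0*b+x)*b+y)*b + (x+E)) + E * b ^ 2 := by ring
  have g2 : E * (b ^ 2 - 1) + E = E * b ^ 2 := by
    have : E * (b ^ 2 - 1) + E * 1 = E * (b ^ 2 - 1 + 1) := by ring
    rw [mul_one] at this
    rw [this, Nat.sub_add_cancel h2]
  have hzx : x + E - x = E := by omega
  rw [hzx]
  omega

lemma kapExpand (b D : ℕ) (h1 : 1 ≤ D) (h2 : D < b) :
    D * (b ^ 2 - 1) = b * (b * (D - 1) + (b - 1)) + (b - D) := by
  obtain ⟨E, rfl⟩ : ∃ E, D = E + 1 := ⟨D - 1, by omega⟩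
  obtain ⟨F, rfl⟩ : ∃ F, b = E + F + 2 := ⟨b - E - 2, by omega⟩
  have e1 : (E + F + 2) ^ 2 - 1 = (E + F + 1) * (E + F + 3) := by
    have : (E + F + 2) ^ 2 = (E + F + 1) * (E + F + 3) + 1 := by ring
    omega
  have e2 : E + 1 - 1 = E := by omega
  have e3 : E + F + 2 - 1 = E + F + 1 := by omega
  have e4 : E + F + 2 - (E + 1) = F + 1 := by omega
  rw [e1, e2, e3, e4]; ring

lemma kapDivMod (b Q r : ℕ) (hb : 0 < b) (hr : r < b) :
    (b * Q + r) % b = r ∧ (b * Q + r) / b = Q := by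
  constructor
  · rw [Nat.mul_add_mod, Nat.mod_eq_of_lt hr]
  · rw [Nat.mul_add_div hb, Nat.div_eq_of_lt hr, add_zero]


/-- A 3-digit base-b string n (b ≥ 2, n < b³) is a nonzero fixed
point of the 3-digit Kaprekar transform if and only if b is even and
n = (b/2-1)·b² + (b-1)·b + b/2; in particular odd bases admit no 3-digit
Kaprekar fixed point other than 0. -/
theorem kaprekar_three_digit_fixed_point_iff (b n : ℕ) (hb : 2 ≤ b)
    (hn : n < b ^ 3) :
    (kap b 3 n = n ∧ n ≠ 0) ↔
      (Even b ∧ n = (b / 2 - 1) * b ^ 2 + (b - 1) * b + b / 2) := by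
  have hb0 : 0 < b := by omega
  have key : ∃ lo hi, lo ≤ hi ∧ kap b 3 n = (hi - lo) * (b ^ 2 - 1) ∧
      lo ≤ n % b ∧ lo ≤ n / b % b ∧ lo ≤ n / b ^ 2 % b ∧
      n % b ≤ hi ∧ n / b % b ≤ hi ∧ n / b ^ 2 % b ≤ hi ∧
      (lo = n % b ∨ lo = n / b % b ∨ lo = n / b ^ 2 % b) ∧
      (hi = n % b ∨ hi = n / b % b ∨ hi = n / b ^ 2 % b) := by
    have hdig : kapDigits b 3 n = [n % b, n / b % b, n / b ^ 2 % b] := by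
      simp [kapDigits, List.range_succ]
    set a := n % b with ha
    set c := n / b % b with hc
    set d := n / b ^ 2 % b with hd
    rcases le_or_gt c d with h12 | h12
    · rcases le_or_gt a c with h01 | h01
      · exact ⟨a, d, by omega, kap_sorted b n a c d hb
          (by simp [hdig, List.insertionSort, List.orderedInsert, h01, h12]) (by omega),
          by omega, by omega, by omega, by omega, by omega, by omega, by tauto, by tauto⟩
      · rcases le_or_gt a d with h02 | h02
        · exact ⟨c, d, by omega, kap_sorted b n c a d hb
            (by simp [hdig, List.insertionSort, List.orderedInsert, h12, h02,
              show ¬ (a ≤ c) by omega]) (by omega),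
            by omega, by omega, by omega, by omega, by omega, by omega, by tauto, by tauto⟩
        · exact ⟨c, a, by omega, kap_sorted b n c d a hb
            (by simp [hdig, List.insertionSort, List.orderedInsert, h12,
              show ¬ (a ≤ c) by omega, show ¬ (a ≤ d) by omega]) (by omega),
            by omega, by omega, by omega, by omega, by omega, by omega, by tauto, by tauto⟩
    · rcases le_or_gt a d with h02 | h02
      · exact ⟨a, c, by omega, kap_sorted b n a d c hb
          (by simp [hdig, List.insertionSort, List.orderedInsert, h02,
            show ¬ (c ≤ d) by omega]) (by omega),
          by omega, by omega, by omega, by omega, by omega, by omega, by tauto, by tauto⟩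
      · rcases le_or_gt a c with h01 | h01
        · exact ⟨d, c, by omega, kap_sorted b n d a c hb
            (by simp [hdig, List.insertionSort, List.orderedInsert, h01,
              show ¬ (c ≤ d) by omega, show ¬ (a ≤ d) by omega]) (by omega),
            by omega, by omega, by omega, by omega, by omega, by omega, by tauto, by tauto⟩
        · exact ⟨d, a, by omega, kap_sorted b n d c a hb
            (by simp [hdig, List.insertionSort, List.orderedInsert,
              show ¬ (c ≤ d) by omega, show ¬ (a ≤ d) by omega, show ¬ (a ≤ c) by omega])
            (by omega),
            by omega, by omega, by omega, by omega, by omega, by omega, by tauto, by tauto⟩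
  obtain ⟨lo, hi, hle, hkap, l0, l1, l2, u0, u1, u2, hlo, hhi⟩ := key
  have hdb0 : n % b < b := Nat.mod_lt _ hb0
  have hdb1 : n / b % b < b := Nat.mod_lt _ hb0
  have hdb2 : n / b ^ 2 % b < b := Nat.mod_lt _ hb0
  have hib : hi < b := by omega
  constructor
  · rintro ⟨hk, hne⟩
    have hn0 : n = (hi - lo) * (b ^ 2 - 1) := by rw [← hk, hkap]
    have hD1 : 1 ≤ hi - lo := by
      rcases Nat.eq_zero_or_pos (hi - lo) with h | h
      · rw [h, zero_mul] at hn0; exact absurd hn0 hne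
      · omega
    set D := hi - lo with hD
    have hDb : D < b := by omega
    have hn' : n = b * (b * (D - 1) + (b - 1)) + (b - D) := by
      rw [hn0, kapExpand b D hD1 hDb]
    have e0 := kapDivMod b (b * (D - 1) + (b - 1)) (b - D) hb0 (by omega)
    have f0 : n % b = b - D := by rw [hn']; exact e0.1
    have fdiv : n / b = b * (D - 1) + (b - 1) := by rw [hn']; exact e0.2
    have e1 := kapDivMod b (D - 1) (b - 1) hb0 (by omega)
    have f1 : n / b % b = b - 1 := by rw [fdiv]; exact e1.1
    have fdiv2 : n / b ^ 2 = D - 1 := by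
      rw [pow_two, ← Nat.div_div_eq_div_mul, fdiv]; exact e1.2
    have f2 : n / b ^ 2 % b = D - 1 := by
      rw [fdiv2]; exact Nat.mod_eq_of_lt (by omega)
    rw [f0] at l0 u0 hlo hhi
    rw [f1] at l1 u1 hlo hhi
    rw [f2] at l2 u2 hlo hhi
    have hbD : b = 2 * D := by omega
    refine ⟨⟨D, by omega⟩, ?_⟩
    have h2' : b / 2 = D := by omega
    rw [h2', hn', show b - D = D by omega]
    ring
  · rintro ⟨hEv, hne⟩
    have hbD : b = 2 * (b / 2) := by
      rcases hEv with ⟨r, hr⟩; omega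
    set D := b / 2 with hDdef
    have hD1 : 1 ≤ D := by omega
    have hDb : D < b := by omega
    have hn' : n = b * (b * (D - 1) + (b - 1)) + D := by rw [hne]; ring
    have hne0 : n ≠ 0 := by omega
    refine ⟨?_, hne0⟩
    have e0 := kapDivMod b (b * (D - 1) + (b - 1)) D hb0 hDb
    have f0 : n % b = D := by rw [hn']; exact e0.1
    have fdiv : n / b = b * (D - 1) + (b - 1) := by rw [hn']; exact e0.2
    have e1 := kapDivMod b (D - 1) (b - 1) hb0 (by omega)
    have f1 : n / b % b = b - 1 := by rw [fdiv]; exact e1.1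
    have f2 : n / b ^ 2 % b = D - 1 := by
      rw [pow_two, ← Nat.div_div_eq_div_mul, fdiv, e1.2]
      exact Nat.mod_eq_of_lt (by omega)
    rw [f0] at l0 u0 hlo hhi
    rw [f1] at l1 u1 hlo hhi
    rw [f2] at l2 u2 hlo hhi
    have hDD : hi - lo = D := by omega
    rw [hkap, hDD, kapExpand b D hD1 hDb, hn', show b - D = D by omega]
end
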